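/- Let k be a field, d a positive natural number, and R = k[x_1,…,x_t, y_1,…,y_s] the polynomial ring in t + s variables; let M ⊆ R be the ideal generated by all the variables. Suppose h_1,…,h_s and h'_1,…,h'_s are polynomials in the variables x_1,…,x_t only, each with zero constant term and total degree at most d − 1. If the ideal of R generated by {y_1 + h_1,…, y_s + h_s} together with M^d equals the ideal generated by {y_1 + h'_1,…, y_s + h'_s} together with M^d, then h_i = h'_i for every i. -/

import Mathlib

/-!
Substituting `x ↦ x`, `y_i ↦ -h_i` kills every generator `y_i + h_i` and, because the `h_i` have no
constant term, sends `M` into the ideal `m` of the `x`-variables; so it maps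
`(y_i + h_i) + M^d` into `m^d`. Applied to `y_i + h'_i`, which lies in that ideal by hypothesis,
it shows `h'_i - h_i ∈ m^d`, and a polynomial of total degree `< d` in `m^d` is zero.
-/

open MvPolynomial

namespace MvPolynomial

variable {σ ι R : Type*} [CommRing R]

lemma mem_idealOfVars_of_constantCoeff_eq_zero {p : MvPolynomial σ R}
    (hp : constantCoeff p = 0) : p ∈ idealOfVars σ R := by
  rw [← pow_one (idealOfVars σ R), mem_pow_idealOfVars_iff]
  intro x hx
  have hx0 : x ≠ 0 := by
    rintro rfl
    exact mem_support_iff.mp hx hp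
  rwa [Nat.one_le_iff_ne_zero, Ne, Finsupp.degree_eq_zero_iff]

lemma eq_zero_of_mem_pow_idealOfVars_of_totalDegree_lt {n : ℕ} {p : MvPolynomial σ R}
    (hp : p ∈ idealOfVars σ R ^ n) (hdeg : p.totalDegree < n) : p = 0 := by
  rw [mem_pow_idealOfVars_iff] at hp
  refine support_eq_empty.mp (Finset.eq_empty_of_forall_notMem fun x hx => ?_)
  have : x.degree ≤ p.totalDegree := le_totalDegree hx
  exact absurd (hp x hx) (by omega)

variable (h : ι → MvPolynomial σ R)

/-- The ideal `(y_i + h_i)_i + M^d`, with `σ` indexing the `x`- and `ι` the `y`-variables. -/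
noncomputable abbrev graphIdeal (d : ℕ) : Ideal (MvPolynomial (σ ⊕ ι) R) :=
  Ideal.span (Set.range fun i => X (Sum.inr i) + rename Sum.inl (h i))
    + idealOfVars (σ ⊕ ι) R ^ d

noncomputable def graphSubst : MvPolynomial (σ ⊕ ι) R →ₐ[R] MvPolynomial σ R :=
  aeval (Sum.elim X fun i => -h i)

@[simp]
lemma graphSubst_X_inl (j : σ) : graphSubst h (X (Sum.inl j)) = X j := by
  simp [graphSubst]

@[simp]
lemma graphSubst_X_inr (i : ι) : graphSubst h (X (Sum.inr i)) = -h i := by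
  simp [graphSubst]

@[simp]
lemma graphSubst_rename_inl (p : MvPolynomial σ R) : graphSubst h (rename Sum.inl p) = p := by
  rw [graphSubst, aeval_rename, Sum.elim_comp_inl, aeval_X_left_apply]

lemma graphSubst_X_inr_add_rename_inl (i : ι) (q : MvPolynomial σ R) :
    graphSubst h (X (Sum.inr i) + rename Sum.inl q) = q - h i := by
  simp [neg_add_eq_sub]

lemma map_graphSubst_idealOfVars (h0 : ∀ i, constantCoeff (h i) = 0) :
    (idealOfVars (σ ⊕ ι) R).map (graphSubst h) ≤ idealOfVars σ R := by
  rw [Ideal.map_span, Ideal.span_le]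
  rintro _ ⟨_, ⟨v, rfl⟩, rfl⟩
  cases v with
  | inl j => exact Ideal.subset_span ⟨j, (graphSubst_X_inl h j).symm⟩
  | inr i =>
    rw [graphSubst_X_inr]
    exact neg_mem (mem_idealOfVars_of_constantCoeff_eq_zero (h0 i))

lemma graphIdeal_le_comap_graphSubst (h0 : ∀ i, constantCoeff (h i) = 0) (d : ℕ) :
    graphIdeal h d ≤ (idealOfVars σ R ^ d).comap (graphSubst h) := by
  refine sup_le ?_ ?_
  · rw [Ideal.span_le]
    rintro _ ⟨i, rfl⟩
    simp [graphSubst_X_inr_add_rename_inl]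
  · rw [← Ideal.map_le_iff_le_comap, Ideal.map_pow]
    exact Ideal.pow_right_mono (map_graphSubst_idealOfVars h h0) d

lemma sub_mem_pow_idealOfVars_of_mem_graphIdeal (h0 : ∀ i, constantCoeff (h i) = 0) {d : ℕ}
    {i : ι} {q : MvPolynomial σ R} (hq : X (Sum.inr i) + rename Sum.inl q ∈ graphIdeal h d) :
    q - h i ∈ idealOfVars σ R ^ d := by
  rw [← graphSubst_X_inr_add_rename_inl]
  exact graphIdeal_le_comap_graphSubst h h0 d hq

end MvPolynomial

theorem stmt_8_general (k : Type*) [Field k] (d s t : ℕ) (hd : 0 < d)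
    (h h' : Fin s → MvPolynomial (Fin t) k)
    (h0 : ∀ i, constantCoeff (h i) = 0)
    (hdeg : ∀ i, (h i).totalDegree ≤ d - 1)
    (hdeg' : ∀ i, (h' i).totalDegree ≤ d - 1)
    (heq :
      Ideal.span (Set.range fun i : Fin s =>
          (X (Sum.inr i) : MvPolynomial (Fin t ⊕ Fin s) k)
            + rename Sum.inl (h i))
        + (Ideal.span (Set.range
            (X : Fin t ⊕ Fin s → MvPolynomial (Fin t ⊕ Fin s) k))) ^ d
      = Ideal.span (Set.range fun i : Fin s =>
          (X (Sum.inr i) : MvPolynomial (Fin t ⊕ Fin s) k)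
            + rename Sum.inl (h' i))
        + (Ideal.span (Set.range
            (X : Fin t ⊕ Fin s → MvPolynomial (Fin t ⊕ Fin s) k))) ^ d) :
    h = h' := by
  funext i
  have hgen : X (Sum.inr i) + rename Sum.inl (h' i) ∈ graphIdeal h d := by
    rw [graphIdeal, heq]
    exact Ideal.mem_sup_left (Ideal.subset_span ⟨i, rfl⟩)
  have hdiff := sub_mem_pow_idealOfVars_of_mem_graphIdeal h h0 hgen
  have hdiff_deg : (h' i - h i).totalDegree < d :=
    (totalDegree_sub _ _).trans_lt (by have := hdeg i; have := hdeg' i; omega)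
  exact (sub_eq_zero.mp (eq_zero_of_mem_pow_idealOfVars_of_totalDegree_lt hdiff hdiff_deg)).symm

/-- Uniqueness of the generators `y_i + h_i`: if `h_i, h'_i` are polynomials in the
`x`-variables only, with zero constant term and total degree `≤ d - 1`, and the ideals
`(y_1 + h_1, …, y_s + h_s) + M^d` and `(y_1 + h'_1, …, y_s + h'_s) + M^d` coincide
(`M` being the ideal of all variables), then `h_i = h'_i` for all `i`. -/
theorem stmt_8 (k : Type*) [Field k] (d s t : ℕ) (hd : 0 < d)
    (h h' : Fin s → MvPolynomial (Fin t) k)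
    (h0 : ∀ i, constantCoeff (h i) = 0)
    (h0' : ∀ i, constantCoeff (h' i) = 0)
    (hdeg : ∀ i, (h i).totalDegree ≤ d - 1)
    (hdeg' : ∀ i, (h' i).totalDegree ≤ d - 1)
    (heq :
      Ideal.span (Set.range fun i : Fin s =>
          (X (Sum.inr i) : MvPolynomial (Fin t ⊕ Fin s) k)
            + rename Sum.inl (h i))
        + (Ideal.span (Set.range
            (X : Fin t ⊕ Fin s → MvPolynomial (Fin t ⊕ Fin s) k))) ^ d
      = Ideal.span (Set.range fun i : Fin s =>
          (X (Sum.inr i) : MvPolynomial (Fin t ⊕ Fin s) k)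
            + rename Sum.inl (h' i))
        + (Ideal.span (Set.range
            (X : Fin t ⊕ Fin s → MvPolynomial (Fin t ⊕ Fin s) k))) ^ d) :
    h = h' :=
  stmt_8_general k d s t hd h h' h0 hdeg hdeg' heq
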